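/- Monotonicity of the distributed LS-EM iteration: fix α, β > 0 and p ∈ (0,1); define V(x, π) as the EM objective and suppose 0 < τ ≤ 1/μ where μ ≥ ‖A^T W A‖ for all diagonal weight matrices W with entries in [1/β², 1/α²]. If x^{(t+1)} = (I - τ L_{W^{(t)}}) x^{(t)} + τ A^T W^{(t)} b with W^{(t)} determined by π^{(t)}, and π^{(t+1)}_e = f(z_e = 1 | x^{(t+1)}, α, β), then V(x^{(t+1)}, π^{(t+1)}) ≤ V(x^{(t)}, π^{(t)}) for all t. -/

import Mathlib

/-! `V` is the variational free energy of the two-component Gaussian scale mixture, so one LS-EM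
iteration is two successive descents.

*E-step.* For a fixed residual `r`, the summand of edge `e` is the binary free energy
`π c₁ + (1 - π) c₀ - H(π)` with `c₁ = r² / 2β² - log (p / β)`, `c₀ = r² / 2α² - log ((1 - p) / α)`.
By Gibbs' inequality it equals `-log (e^{-c₁} + e^{-c₀})` at the posterior weight
`e^{-c₁} / (e^{-c₁} + e^{-c₀})` and is at least that everywhere on `[0, 1]`.

*M-step.* For fixed weights, `V` is `½ ‖b - A x‖²_W` plus a constant, and the update is the gradient
step `x - τ g`. It changes the quadratic by `-τ ‖g‖² + τ²/2 ⟪AᵀWA g, g⟫ ≤ τ ‖g‖² (τμ/2 - 1) ≤ 0`.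
-/

open Matrix Filter Set

/-- `A` is the signed edge–incidence matrix of a connected undirected graph with
edge set `E` and vertex set `V`. -/
def IsConnectedIncidence {E V : Type*} [DecidableEq V] (A : Matrix E V ℝ) : Prop :=
  ∃ src tgt : E → V, (∀ e, src e ≠ tgt e) ∧
    (∀ e v, A e v = (if v = src e then 1 else 0) - (if v = tgt e then 1 else 0)) ∧
    (SimpleGraph.fromRel fun u v => ∃ e, src e = u ∧ tgt e = v).Connected

/-- `Ld` is the Moore–Penrose pseudoinverse of `L`. -/
def IsMoorePenrose {n : Type*} [Fintype n] (L Ld : Matrix n n ℝ) : Prop :=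
  L * Ld * L = L ∧ Ld * L * Ld = Ld ∧ (L * Ld)ᵀ = L * Ld ∧ (Ld * L)ᵀ = Ld * L

/-- The spectral (`ℓ²`-operator) norm of a real matrix. -/
noncomputable def specNorm {m n : Type*} [Fintype m] [Fintype n] [DecidableEq n]
    (M : Matrix m n ℝ) : ℝ :=
  ‖LinearMap.toContinuousLinearMap (Matrix.toEuclideanLin M)‖

noncomputable section

open Real

section Gibbs

lemma sub_le_mul_log_sub_mul_log {q c : ℝ} (hq : 0 ≤ q) (hc : 0 < c) :
    q - c ≤ q * log q - q * log c := by
  rcases hq.eq_or_lt with rfl | hq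
  · simpa using hc.le
  · have h := mul_le_mul_of_nonneg_left (log_le_sub_one_of_pos (div_pos hc hq)) hq.le
    rw [log_div hc.ne' hq.ne', mul_sub, mul_sub, mul_div_cancel₀ _ hq.ne'] at h
    linarith

lemma binary_crossEntropy_le {q c : ℝ} (hq : q ∈ Icc (0 : ℝ) 1) (hc : c ∈ Ioo (0 : ℝ) 1) :
    q * log c + (1 - q) * log (1 - c) ≤ q * log q + (1 - q) * log (1 - q) := by
  have h₁ := sub_le_mul_log_sub_mul_log hq.1 hc.1
  have h₀ := sub_le_mul_log_sub_mul_log (sub_nonneg.2 hq.2) (sub_pos.2 hc.2)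
  linarith

def freeEnergy (c₁ c₀ q : ℝ) : ℝ :=
  q * c₁ + (1 - q) * c₀ + q * log q + (1 - q) * log (1 - q)

def gibbsWeight (c₁ c₀ : ℝ) : ℝ :=
  exp (-c₁) / (exp (-c₁) + exp (-c₀))

lemma gibbsWeight_mem_Ioo (c₁ c₀ : ℝ) : gibbsWeight c₁ c₀ ∈ Ioo (0 : ℝ) 1 := by
  have h₁ := exp_pos (-c₁)
  have h₀ := exp_pos (-c₀)
  exact ⟨by unfold gibbsWeight; positivity, (div_lt_one (by positivity)).2 (by linarith)⟩

lemma one_sub_gibbsWeight (c₁ c₀ : ℝ) :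
    1 - gibbsWeight c₁ c₀ = exp (-c₀) / (exp (-c₁) + exp (-c₀)) := by
  have : exp (-c₁) + exp (-c₀) ≠ 0 := by positivity
  rw [gibbsWeight]
  field_simp
  ring

lemma log_gibbsWeight (c₁ c₀ : ℝ) :
    log (gibbsWeight c₁ c₀) = -c₁ - log (exp (-c₁) + exp (-c₀)) := by
  rw [gibbsWeight, log_div (exp_pos _).ne' (by positivity), log_exp]

lemma log_one_sub_gibbsWeight (c₁ c₀ : ℝ) :
    log (1 - gibbsWeight c₁ c₀) = -c₀ - log (exp (-c₁) + exp (-c₀)) := by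
  rw [one_sub_gibbsWeight, log_div (exp_pos _).ne' (by positivity), log_exp]

lemma freeEnergy_gibbsWeight (c₁ c₀ : ℝ) :
    freeEnergy c₁ c₀ (gibbsWeight c₁ c₀) = -log (exp (-c₁) + exp (-c₀)) := by
  rw [freeEnergy, log_gibbsWeight, log_one_sub_gibbsWeight]
  ring

lemma freeEnergy_gibbsWeight_le (c₁ c₀ : ℝ) {q : ℝ} (hq : q ∈ Icc (0 : ℝ) 1) :
    freeEnergy c₁ c₀ (gibbsWeight c₁ c₀) ≤ freeEnergy c₁ c₀ q := by
  have h := binary_crossEntropy_le hq (gibbsWeight_mem_Ioo c₁ c₀)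
  rw [log_gibbsWeight, log_one_sub_gibbsWeight] at h
  rw [freeEnergy_gibbsWeight, freeEnergy]
  linarith

lemma mul_exp_div_eq_gibbsWeight {a a' : ℝ} (ha : 0 < a) (ha' : 0 < a') (s s' : ℝ) :
    a * exp s / (a * exp s + a' * exp s') = gibbsWeight (-s - log a) (-s' - log a') := by
  simp only [gibbsWeight, neg_sub, sub_neg_eq_add, exp_add, exp_log ha, exp_log ha']

end Gibbs

section LeastSquares

open scoped RealInnerProductSpace

lemma dotProduct_mulVec_self_le_specNorm {n : Type*} [Fintype n] [DecidableEq n]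
    (M : Matrix n n ℝ) (v : n → ℝ) : M *ᵥ v ⬝ᵥ v ≤ specNorm M * (v ⬝ᵥ v) := by
  set T := LinearMap.toContinuousLinearMap (toEuclideanLin M)
  set v' : EuclideanSpace ℝ n := WithLp.toLp 2 v
  have hMv : M *ᵥ v ⬝ᵥ v = ⟪T v', v'⟫ := by
    simp only [T, v', LinearMap.coe_toContinuousLinearMap', toLpLin_apply,
      PiLp.inner_apply, RCLike.inner_apply, conj_trivial, dotProduct, mul_comm]
  have hv : v ⬝ᵥ v = ‖v'‖ ^ 2 := by
    rw [← real_inner_self_eq_norm_sq]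
    simp only [v', PiLp.inner_apply, RCLike.inner_apply, conj_trivial, dotProduct]
  rw [hMv, hv]
  calc ⟪T v', v'⟫ ≤ ‖T v'‖ * ‖v'‖ := real_inner_le_norm _ _
    _ ≤ ‖T‖ * ‖v'‖ * ‖v'‖ := by gcongr; exact T.le_opNorm v'
    _ = ‖T‖ * ‖v'‖ ^ 2 := by ring

variable {E V : Type*} [Fintype E] [Fintype V] [DecidableEq E]
  (A : Matrix E V ℝ) (b w : E → ℝ)

lemma gradientStep_eq [DecidableEq V] (τ : ℝ) (x : V → ℝ) :
    (1 - τ • (Aᵀ * diagonal w * A)) *ᵥ x + τ • (Aᵀ * diagonal w) *ᵥ b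
      = x - τ • (Aᵀ *ᵥ (w * (A *ᵥ x - b))) := by
  have hw : w * (A *ᵥ x - b) = diagonal w *ᵥ (A *ᵥ x) - diagonal w *ᵥ b := by
    ext e; simp only [Pi.mul_apply, Pi.sub_apply, mulVec_diagonal, mul_sub]
  simp only [hw, sub_mulVec, one_mulVec, smul_mulVec, ← mulVec_mulVec, mulVec_sub, smul_sub]
  abel

lemma weightedSq_sub_smul (τ : ℝ) (x g : V → ℝ) :
    ∑ e, (1 / 2) * (b - A *ᵥ (x - τ • g)) e ^ 2 * w e
      = ∑ e, (1 / 2) * (b - A *ᵥ x) e ^ 2 * w e - τ * (Aᵀ *ᵥ (w * (A *ᵥ x - b)) ⬝ᵥ g)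
        + τ ^ 2 / 2 * ((Aᵀ * diagonal w * A) *ᵥ g ⬝ᵥ g) := by
  have hlin : Aᵀ *ᵥ (w * (A *ᵥ x - b)) ⬝ᵥ g = ∑ e, w e * (A *ᵥ x - b) e * (A *ᵥ g) e := by
    rw [mulVec_transpose, ← dotProduct_mulVec]; rfl
  have hquad : (Aᵀ * diagonal w * A) *ᵥ g ⬝ᵥ g = ∑ e, w e * (A *ᵥ g) e ^ 2 := by
    rw [← mulVec_mulVec, ← mulVec_mulVec, mulVec_transpose, ← dotProduct_mulVec]
    simp only [dotProduct, mulVec_diagonal, sq, mul_assoc]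
  rw [hlin, hquad, Finset.mul_sum, Finset.mul_sum, ← Finset.sum_sub_distrib,
    ← Finset.sum_add_distrib]
  refine Finset.sum_congr rfl fun e _ => ?_
  simp only [mulVec_sub, mulVec_smul, Pi.sub_apply, Pi.smul_apply, smul_eq_mul]
  ring

lemma weightedSq_gradientStep_le [DecidableEq V] {μ τ : ℝ}
    (hμ : specNorm (Aᵀ * diagonal w * A) ≤ μ) (hτ : 0 ≤ τ) (hτμ : τ * μ ≤ 2) (x : V → ℝ) :
    ∑ e, (1 / 2) * (b - A *ᵥ ((1 - τ • (Aᵀ * diagonal w * A)) *ᵥ x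
        + τ • (Aᵀ * diagonal w) *ᵥ b)) e ^ 2 * w e
      ≤ ∑ e, (1 / 2) * (b - A *ᵥ x) e ^ 2 * w e := by
  set g := Aᵀ *ᵥ (w * (A *ᵥ x - b))
  have hgg : 0 ≤ g ⬝ᵥ g := Finset.sum_nonneg fun _ _ => mul_self_nonneg _
  have hcurv : (Aᵀ * diagonal w * A) *ᵥ g ⬝ᵥ g ≤ μ * (g ⬝ᵥ g) :=
    (dotProduct_mulVec_self_le_specNorm _ g).trans (mul_le_mul_of_nonneg_right hμ hgg)
  rw [gradientStep_eq, weightedSq_sub_smul]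
  nlinarith [mul_le_mul_of_nonneg_left hcurv (sq_nonneg τ), mul_nonneg hτ hgg]

end LeastSquares

section EM

variable (α β p : ℝ)

/-- The summand of `V` at an edge with residual `r` and weight `q`; `V y π` unfolds to
`∑ e, emTerm α β p ((b - A *ᵥ y) e) (π e)`. -/
def emTerm (r q : ℝ) : ℝ :=
  (1 / 2) * r ^ 2 * ((1 - q) / α ^ 2 + q / β ^ 2) - q * log (p / β)
    - (1 - q) * log ((1 - p) / α) + q * log q + (1 - q) * log (1 - q)

def posterior (r : ℝ) : ℝ :=
  (p / β) * exp (-r ^ 2 / (2 * β ^ 2)) /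
    ((p / β) * exp (-r ^ 2 / (2 * β ^ 2)) + ((1 - p) / α) * exp (-r ^ 2 / (2 * α ^ 2)))

lemma emTerm_eq_freeEnergy (r q : ℝ) :
    emTerm α β p r q
      = freeEnergy (r ^ 2 / (2 * β ^ 2) - log (p / β))
          (r ^ 2 / (2 * α ^ 2) - log ((1 - p) / α)) q := by
  rw [emTerm, freeEnergy]
  ring

variable {α β p}

lemma posterior_eq_gibbsWeight (hα : 0 < α) (hβ : 0 < β) (hp : p ∈ Ioo (0 : ℝ) 1) (r : ℝ) :
    posterior α β p r
      = gibbsWeight (r ^ 2 / (2 * β ^ 2) - log (p / β))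
          (r ^ 2 / (2 * α ^ 2) - log ((1 - p) / α)) := by
  rw [posterior, mul_exp_div_eq_gibbsWeight (div_pos hp.1 hβ) (div_pos (sub_pos.2 hp.2) hα)]
  simp only [neg_div, neg_neg]

lemma posterior_mem_Icc (hα : 0 < α) (hβ : 0 < β) (hp : p ∈ Ioo (0 : ℝ) 1) (r : ℝ) :
    posterior α β p r ∈ Icc (0 : ℝ) 1 :=
  posterior_eq_gibbsWeight hα hβ hp r ▸ Ioo_subset_Icc_self (gibbsWeight_mem_Ioo _ _)

lemma emTerm_posterior_le (hα : 0 < α) (hβ : 0 < β) (hp : p ∈ Ioo (0 : ℝ) 1) (r : ℝ) {q : ℝ}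
    (hq : q ∈ Icc (0 : ℝ) 1) : emTerm α β p r (posterior α β p r) ≤ emTerm α β p r q := by
  rw [emTerm_eq_freeEnergy, emTerm_eq_freeEnergy, posterior_eq_gibbsWeight hα hβ hp]
  exact freeEnergy_gibbsWeight_le _ _ hq

lemma emWeight_mem_Icc (hα : 0 < α) (hαβ : α ≤ β) {q : ℝ} (hq : q ∈ Icc (0 : ℝ) 1) :
    (1 - q) / α ^ 2 + q / β ^ 2 ∈ Icc (1 / β ^ 2) (1 / α ^ 2) := by
  have hinv : 1 / β ^ 2 ≤ 1 / α ^ 2 := one_div_le_one_div_of_le (by positivity) (by gcongr)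
  have hconv : (1 - q) / α ^ 2 + q / β ^ 2 = (1 - q) * (1 / α ^ 2) + q * (1 / β ^ 2) := by ring
  rw [hconv]
  constructor <;> nlinarith [hq.1, hq.2]

lemma sum_emTerm_le_of_weightedSq_le {E : Type*} [Fintype E] (r r' q : E → ℝ)
    (h : ∑ e, (1 / 2) * r' e ^ 2 * ((1 - q e) / α ^ 2 + q e / β ^ 2)
      ≤ ∑ e, (1 / 2) * r e ^ 2 * ((1 - q e) / α ^ 2 + q e / β ^ 2)) :
    ∑ e, emTerm α β p (r' e) (q e) ≤ ∑ e, emTerm α β p (r e) (q e) := by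
  have hsplit : ∀ e, emTerm α β p (r' e) (q e) = emTerm α β p (r e) (q e)
      + ((1 / 2) * r' e ^ 2 * ((1 - q e) / α ^ 2 + q e / β ^ 2)
        - (1 / 2) * r e ^ 2 * ((1 - q e) / α ^ 2 + q e / β ^ 2)) := fun e => by
    rw [emTerm, emTerm]; ring
  rw [Finset.sum_congr rfl fun e _ => hsplit e, Finset.sum_add_distrib, Finset.sum_sub_distrib]
  linarith

end EM

end

/-- monotonicity of the EM objective along the distributed LS-EM iterates. -/
theorem distributed_LSEM_monotone
    {E V : Type*} [Fintype E] [Fintype V] [DecidableEq V] [DecidableEq E]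
    (A : Matrix E V ℝ) (b : E → ℝ)
    (α β p : ℝ) (hα : 0 < α) (hαβ : α < β) (hp : p ∈ Set.Ioo (0:ℝ) 1)
    (μ τ : ℝ)
    (hμ : ∀ w : E → ℝ, (∀ e, w e ∈ Set.Icc (1 / β ^ 2) (1 / α ^ 2)) →
      specNorm (Aᵀ * Matrix.diagonal w * A) ≤ μ)
    (hτ0 : 0 < τ) (hτ : τ ≤ 1 / μ)
    (x : ℕ → V → ℝ) (q : ℕ → E → ℝ)
    (hq0 : ∀ e, q 0 e ∈ Set.Icc (0:ℝ) 1)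
    (hxrec : ∀ t, x (t + 1) =
      (1 - τ • (Aᵀ * Matrix.diagonal (fun e => (1 - q t e) / α ^ 2 + q t e / β ^ 2) * A)).mulVec
          (x t) +
        τ • (Aᵀ * Matrix.diagonal (fun e => (1 - q t e) / α ^ 2 + q t e / β ^ 2)).mulVec b)
    (hqrec : ∀ t e, q (t + 1) e =
      (p / β) * Real.exp (-((b - A.mulVec (x (t+1))) e) ^ 2 / (2 * β ^ 2)) /
        ((p / β) * Real.exp (-((b - A.mulVec (x (t+1))) e) ^ 2 / (2 * β ^ 2))
          + ((1 - p) / α) * Real.exp (-((b - A.mulVec (x (t+1))) e) ^ 2 / (2 * α ^ 2)))) :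
    let Vf : (V → ℝ) → (E → ℝ) → ℝ := fun y π => ∑ e : E,
      ((1/2) * ((b - A.mulVec y) e) ^ 2 * ((1 - π e) / α ^ 2 + π e / β ^ 2)
        - π e * Real.log (p / β) - (1 - π e) * Real.log ((1 - p) / α)
        + π e * Real.log (π e) + (1 - π e) * Real.log (1 - π e))
    ∀ t : ℕ, Vf (x (t + 1)) (q (t + 1)) ≤ Vf (x t) (q t) := by
  intro Vf t
  have hβ : 0 < β := hα.trans hαβ
  have hμpos : 0 < μ := one_div_pos.mp (hτ0.trans_le hτ)
  have hτμ : τ * μ ≤ 2 := by linarith [(le_div_iff₀ hμpos).mp hτ]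
  have hq : ∀ s e, q s e ∈ Icc (0 : ℝ) 1 := by
    rintro (_ | s) e
    · exact hq0 e
    · exact hqrec s e ▸ posterior_mem_Icc hα hβ hp _
  have e_step : Vf (x (t + 1)) (q (t + 1)) ≤ Vf (x (t + 1)) (q t) :=
    Finset.sum_le_sum fun e _ => hqrec t e ▸ emTerm_posterior_le hα hβ hp _ (hq t e)
  have m_step : Vf (x (t + 1)) (q t) ≤ Vf (x t) (q t) := by
    refine sum_emTerm_le_of_weightedSq_le _ _ _ ?_
    rw [hxrec t]
    exact weightedSq_gradientStep_le A b _
      (hμ _ fun e => emWeight_mem_Icc hα hαβ.le (hq t e)) hτ0.le hτμ (x t)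
  exact e_step.trans m_step
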